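/- Let n ≥ 2 and suppose s, p, q, a, α, μ, β satisfy conditions (A1)–(A8) with γ1 = γ2 = γ3 = 0, together with a > 0, p = 1, and 1/s − (1−a)/q < 1. Define b = (1/a)(1/s − (1−a)/q) and λ = a(1−b)/(1−ab), and set â = ab, ŝ = s, p̂ = 1, 1/q̂ = λ + (1−λ)/q, γ̂1 = α, γ̂2 = μ, γ̂3 = λμ + (1−λ)β. Then the parameters (ŝ, p̂, q̂, â, γ̂1, γ̂2, γ̂3) satisfy: ŝ, q̂ > 0, p̂ ≥ 1, 0 ≤ â ≤ 1; condition (B2) with n replaced by n−1; condition (B3) with n replaced by n−1; condition (B4); and 1/ŝ ≤ â/p̂ + (1−â)/q̂. Moreover 0 < â < 1 and 0 ≤ λ ≤ 1. -/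
import Mathlib


open Real

noncomputable section

/-- Condition (A1). -/
def A1 (s p q a : ℝ) : Prop := 0 < s ∧ 0 < q ∧ 1 ≤ p ∧ 0 ≤ a ∧ a ≤ 1

/-- Condition (A2). -/
def A2 (n : ℕ) (s p q α μ β : ℝ) : Prop :=
  0 < 1/s + α/((n : ℝ) - 1) ∧ 0 < 1/p + μ/((n : ℝ) - 1) ∧ 0 < 1/q + β/((n : ℝ) - 1)

/-- Condition (A3) with `γ₁ = γ₂ = γ₃ = 0`. -/
def A3 (n : ℕ) (s p q α μ β : ℝ) : Prop :=
  0 < 1/s + α/(n : ℝ) ∧ 0 < 1/p + μ/(n : ℝ) ∧ 0 < 1/q + β/(n : ℝ)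

/-- Condition (A4) with `γ₁ = γ₂ = γ₃ = 0`. -/
def A4 (n : ℕ) (s p q a α μ β : ℝ) : Prop :=
  1/s + α/(n : ℝ) = a * (1/p + (μ - 1)/(n : ℝ)) + (1 - a) * (1/q + β/(n : ℝ))

/-- Condition (A6) with `γ₁ = γ₂ = γ₃ = 0`. -/
def A6 (a α μ β : ℝ) : Prop := α ≤ a * μ + (1 - a) * β

/-- Condition (A7). -/
def A7 (n : ℕ) (s p q a α μ β : ℝ) : Prop :=
  a * (1/p + (μ - 1)/((n : ℝ) - 1)) + (1 - a) * (1/q + β/((n : ℝ) - 1)) ≤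
    1/s + α/((n : ℝ) - 1)

/-- Condition (A8) with `γ₁ = γ₂ = γ₃ = 0`. -/
def A8 (n : ℕ) (s p q a α μ β : ℝ) : Prop :=
  (a = 0 ∨ a = 1 ∨
    (1/p + (μ - 1)/(n : ℝ) = 1/q + β/(n : ℝ) ∧ 1/q + β/(n : ℝ) = 1/s + α/(n : ℝ)) ∨
    1/s + α/((n : ℝ) - 1) =
      a * (1/p + (μ - 1)/((n : ℝ) - 1)) + (1 - a) * (1/q + β/((n : ℝ) - 1))) →
  1/s ≤ a/p + (1 - a)/q

/-- `b = (1/a)(1/s - (1-a)/q)`. -/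
def bpar (s q a : ℝ) : ℝ := (1/a) * (1/s - (1 - a)/q)

/-- `λ = a(1-b)/(1-ab)`. -/
def lampar (s q a : ℝ) : ℝ := a * (1 - bpar s q a) / (1 - a * bpar s q a)

/-- `q̂`, defined by `1/q̂ = λ + (1-λ)/q`. -/
def qhat (s q a : ℝ) : ℝ := (lampar s q a + (1 - lampar s q a)/q)⁻¹

/-- `γ̂₃ = λμ + (1-λ)β`. -/
def g3hat (s q a μ β : ℝ) : ℝ := lampar s q a * μ + (1 - lampar s q a) * β

lemma convex_pos {t X Y : ℝ} (ht0 : 0 ≤ t) (ht1 : t ≤ 1) (hX : 0 < X) (hY : 0 < Y) :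
    0 < t * X + (1 - t) * Y := by
  rcases le_total X Y with h | h
  · nlinarith [mul_le_mul_of_nonneg_left h (by linarith : (0:ℝ) ≤ 1 - t)]
  · nlinarith [mul_le_mul_of_nonneg_left h ht0]

/-- Lemma A.2: for `p = 1`, `a > 0`, `γ₁ = γ₂ = γ₃ = 0` and `1/s - (1-a)/q < 1`,
the hatted parameters `(ŝ, p̂, q̂, â, γ̂₁, γ̂₂, γ̂₃) = (s, 1, q̂, ab, α, μ, γ̂₃)`
satisfy conditions (B1)-(B4) in dimension `n-1` together with
`1/ŝ ≤ â/p̂ + (1-â)/q̂`; moreover `0 < â < 1` and `0 ≤ λ ≤ 1`. -/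
theorem hatted_parameters
    (n : ℕ) (hn : 2 ≤ n) (s p q a α μ β : ℝ)
    (h1 : A1 s p q a) (h2 : A2 n s p q α μ β) (h3 : A3 n s p q α μ β)
    (h4 : A4 n s p q a α μ β) (h6 : A6 a α μ β)
    (h7 : A7 n s p q a α μ β) (h8 : A8 n s p q a α μ β)
    (ha : 0 < a) (hp : p = 1) (hsq : 1/s - (1 - a)/q < 1) :
    (0 < s ∧ 0 < qhat s q a ∧ (1 : ℝ) ≤ 1 ∧ 0 ≤ a * bpar s q a ∧ a * bpar s q a ≤ 1) ∧
    (0 < 1/s + α/((n : ℝ) - 1) ∧ 0 < 1/1 + μ/((n : ℝ) - 1) ∧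
      0 < 1/(qhat s q a) + g3hat s q a μ β/((n : ℝ) - 1)) ∧
    (1/s + α/((n : ℝ) - 1) =
      (a * bpar s q a) * (1/1 + (μ - 1)/((n : ℝ) - 1)) +
        (1 - a * bpar s q a) * (1/(qhat s q a) + g3hat s q a μ β/((n : ℝ) - 1))) ∧
    (α ≤ (a * bpar s q a) * μ + (1 - a * bpar s q a) * g3hat s q a μ β) ∧
    (1/s ≤ (a * bpar s q a)/1 + (1 - a * bpar s q a)/(qhat s q a)) ∧
    (0 < a * bpar s q a ∧ a * bpar s q a < 1 ∧
      0 ≤ lampar s q a ∧ lampar s q a ≤ 1) := by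
  subst hp
  unfold A1 at h1
  unfold A2 at h2
  unfold A4 at h4
  unfold A6 at h6
  unfold A7 at h7
  obtain ⟨hs, hq, _, ha0, ha1⟩ := h1
  obtain ⟨h2a, h2b, h2c⟩ := h2
  have hn2 : (2:ℝ) ≤ (n:ℝ) := by exact_mod_cast hn
  have hnpos : (0:ℝ) < (n:ℝ) := by linarith
  have hm : (0:ℝ) < (n:ℝ) - 1 := by linarith
  -- basic identities
  have hab : a * bpar s q a = 1/s - (1 - a)/q := by
    unfold bpar; field_simp
  have hc1 : 0 < 1 - a * bpar s q a := by rw [hab]; linarith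
  have hlam : lampar s q a = (a - a * bpar s q a) / (1 - a * bpar s q a) := by
    unfold lampar; ring
  have hqinv : 1/(qhat s q a) = lampar s q a + (1 - lampar s q a)/q := by
    unfold qhat; rw [one_div, inv_inv]
  have hlc : (1 - a * bpar s q a) * lampar s q a = a - a * bpar s q a := by
    rw [hlam]; field_simp
  have hlc2 : (1 - a * bpar s q a) * (1 - lampar s q a) = 1 - a := by
    linear_combination -hlc
  -- condition (A4) rewritten
  have h4' : 1/s - a - (1 - a)/q = (a*(μ-1) + (1-a)*β - α)/(n:ℝ) := by
    linear_combination h4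
  -- condition (A7) rewritten
  have h7' : (a*(μ-1) + (1-a)*β - α)/((n:ℝ)-1) ≤ 1/s - a - (1 - a)/q := by
    have e : (1/s + α/((n:ℝ)-1)) -
        (a * (1/1 + (μ - 1)/((n : ℝ) - 1)) + (1 - a) * (1/q + β/((n : ℝ) - 1))) =
        (1/s - a - (1 - a)/q) - ((a*(μ-1) + (1-a)*β - α)/((n:ℝ)-1)) := by ring
    linarith [h7, e]
  -- E ≤ 0
  have hE0 : a*(μ-1) + (1-a)*β - α ≤ 0 := by
    by_contra hpos
    push_neg at hpos
    have hlt : (a*(μ-1) + (1-a)*β - α)/(n:ℝ) < (a*(μ-1) + (1-a)*β - α)/((n:ℝ)-1) :=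
      div_lt_div_of_pos_left hpos hm (by linarith)
    linarith [h4', h7']
  have hD0 : 1/s - a - (1 - a)/q ≤ 0 := by
    rw [h4']
    exact div_nonpos_of_nonpos_of_nonneg hE0 hnpos.le
  -- -a ≤ E
  have hEa : -a ≤ a*(μ-1) + (1-a)*β - α := by nlinarith [h6]
  have hD : -(a/(n:ℝ)) ≤ 1/s - a - (1 - a)/q := by
    rw [h4', ← neg_div]; gcongr
  have hanl : a/(n:ℝ) < a := div_lt_self ha (by linarith)
  have hcpos : 0 < a * bpar s q a := by rw [hab]; linarith
  have hclt1 : a * bpar s q a < 1 := by rw [hab]; exact hsq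
  have hable : a * bpar s q a ≤ a := by rw [hab]; linarith
  have hlam0 : 0 ≤ lampar s q a := by
    rw [hlam]; exact div_nonneg (by linarith) hc1.le
  have hlam1 : lampar s q a ≤ 1 := by
    rw [hlam, div_le_one hc1]; linarith
  -- q̂ positive
  have hQpos : 0 < lampar s q a + (1 - lampar s q a)/q := by
    have e : (1 - lampar s q a)/q = (1 - lampar s q a)*(1/q) := by ring
    linarith [convex_pos hlam0 hlam1 one_pos (by positivity : (0:ℝ) < 1/q), e]
  have hqhatpos : 0 < qhat s q a := by unfold qhat; exact inv_pos.mpr hQpos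
  -- splitting identity
  have hsplit : 1/(qhat s q a) + g3hat s q a μ β/((n:ℝ)-1) =
      lampar s q a * (1/1 + μ/((n:ℝ)-1)) + (1 - lampar s q a) * (1/q + β/((n:ℝ)-1)) := by
    rw [hqinv]; unfold g3hat; ring
  -- step identity for B3
  have h4c : (1/s - a - (1 - a)/q) * (n:ℝ) = a*(μ-1) + (1-a)*β - α := by
    rw [h4']; exact div_mul_cancel₀ _ hnpos.ne'
  have hstep : 1/s - a - (1 - a)/q =
      ((a*(μ-1) + (1-a)*β - α) - (1/s - a - (1 - a)/q))/((n:ℝ)-1) := by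
    rw [eq_div_iff hm.ne']
    linear_combination h4c
  -- the g3hat identity
  have hg3 : (1 - a * bpar s q a) * g3hat s q a μ β = (a - a * bpar s q a)*μ + (1-a)*β := by
    unfold g3hat; linear_combination μ*hlc + β*hlc2
  -- the qhat identity
  have hqh : (1 - a * bpar s q a) * (1/(qhat s q a)) = (a - a * bpar s q a) + (1-a)/q := by
    rw [hqinv]; linear_combination hlc + (1/q)*hlc2
  refine ⟨⟨hs, hqhatpos, le_refl 1, hcpos.le, hclt1.le⟩,
    ⟨h2a, h2b, ?_⟩, ?_, ?_, ?_, hcpos, hclt1, hlam0, hlam1⟩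
  · rw [hsplit]; exact convex_pos hlam0 hlam1 h2b h2c
  · rw [hsplit]
    linear_combination (-(1 + μ/((n:ℝ)-1)))*hlc - (1/q + β/((n:ℝ)-1))*hlc2 +
      (1/((n:ℝ)-1))*hab + hstep
  · have e4 : (a * bpar s q a) * μ + ((a - a * bpar s q a)*μ + (1-a)*β) =
        a * μ + (1 - a) * β := by ring
    linarith [hg3, h6, e4]
  · have e5 : (1 - a * bpar s q a)/(qhat s q a) =
        (1 - a * bpar s q a) * (1/(qhat s q a)) := by ring
    have e51 : (a * bpar s q a)/1 = a * bpar s q a := by ring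
    linarith [hqh, hD0, e5, e51]

end
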